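/- For every real z ≥ 8 and every a with 0 ≤ a ≤ 3, the Gaussian tail satisfies 1 - Φ(z - a) ≤ 2 e^{z a} (1 - Φ(z)). -/

import Mathlib

noncomputable def stdNormalPDF (x : ℝ) : ℝ :=
  (Real.sqrt (2 * Real.pi))⁻¹ * Real.exp (-x ^ 2 / 2)

noncomputable def stdNormalCDF (x : ℝ) : ℝ :=
  ∫ t in Set.Iic x, stdNormalPDF t

/-!
Bound the left side by the Mills-ratio upper bound `1 - Φ(x) ≤ φ(x)/x` at `x = z - a` and the
right side by the lower bound `φ(x)/(1 + x) ≤ 1 - Φ(x)` at `x = z`, both obtained by integrating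
an explicit antiderivative that dominates, resp. is dominated by, `φ` on `(x, ∞)`. Completing the
square gives `φ(z - a) = e^{za - a²/2} φ(z) ≤ e^{za} φ(z)`, and `z - a ≥ (1 + z)/2` costs the
factor 2.
-/

open Real MeasureTheory Set Filter Topology ProbabilityTheory

lemma stdNormalPDF_eq_gaussianPDFReal : stdNormalPDF = gaussianPDFReal 0 1 := by
  ext x
  simp [stdNormalPDF, gaussianPDFReal]

lemma stdNormalPDF_pos (x : ℝ) : 0 < stdNormalPDF x := by
  unfold stdNormalPDF
  positivity

lemma integrable_stdNormalPDF : Integrable stdNormalPDF :=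
  stdNormalPDF_eq_gaussianPDFReal ▸ integrable_gaussianPDFReal 0 1

lemma integrable_mul_stdNormalPDF : Integrable fun t ↦ t * stdNormalPDF t := by
  have := (integrable_mul_exp_neg_mul_sq (b := 1 / 2) (by norm_num)).const_mul
    (√(2 * π))⁻¹
  refine this.congr (ae_of_all _ fun t ↦ ?_)
  simp only [stdNormalPDF]
  ring_nf

lemma hasDerivAt_stdNormalPDF (x : ℝ) : HasDerivAt stdNormalPDF (-x * stdNormalPDF x) x := by
  have h : HasDerivAt (fun t : ℝ ↦ -t ^ 2 / 2) (-x) x :=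
    ((hasDerivAt_pow 2 x).neg.div_const 2).congr_deriv (by push_cast; ring)
  exact (h.exp.const_mul (√(2 * π))⁻¹).congr_deriv (by simp only [stdNormalPDF]; ring)

lemma tendsto_stdNormalPDF_atTop : Tendsto stdNormalPDF atTop (𝓝 0) := by
  have h : Tendsto (fun t : ℝ ↦ -t ^ 2 / 2) atTop atBot :=
    (tendsto_neg_atBot_iff.mpr (tendsto_pow_atTop two_ne_zero)).atBot_div_const two_pos
  have := (tendsto_exp_atBot.comp h).const_mul (√(2 * π))⁻¹
  rwa [mul_zero] at this

lemma one_sub_stdNormalCDF_eq_integral (x : ℝ) :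
    1 - stdNormalCDF x = ∫ t in Ioi x, stdNormalPDF t := by
  have hsplit := intervalIntegral.integral_Iic_add_Ioi (b := x)
    integrable_stdNormalPDF.integrableOn integrable_stdNormalPDF.integrableOn
  rw [stdNormalPDF_eq_gaussianPDFReal, integral_gaussianPDFReal_eq_one 0 one_ne_zero] at hsplit
  rw [stdNormalCDF, stdNormalPDF_eq_gaussianPDFReal]
  linarith

lemma integral_Ioi_mul_stdNormalPDF (x : ℝ) :
    ∫ t in Ioi x, t * stdNormalPDF t = stdNormalPDF x := by
  have h := integral_Ioi_of_hasDerivAt_of_tendsto' (a := x) (f := fun t ↦ -stdNormalPDF t)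
    (fun t _ ↦ ((hasDerivAt_stdNormalPDF t).neg).congr_deriv (by ring))
    integrable_mul_stdNormalPDF.integrableOn tendsto_stdNormalPDF_atTop.neg
  simpa using h

lemma one_sub_stdNormalCDF_le {x : ℝ} (hx : 0 < x) :
    1 - stdNormalCDF x ≤ stdNormalPDF x / x := by
  rw [one_sub_stdNormalCDF_eq_integral, ← integral_Ioi_mul_stdNormalPDF, ← integral_div]
  refine setIntegral_mono_on integrable_stdNormalPDF.integrableOn
    (integrable_mul_stdNormalPDF.div_const x).integrableOn measurableSet_Ioi fun t ht ↦ ?_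
  rw [mul_div_right_comm]
  exact le_mul_of_one_le_left (stdNormalPDF_pos t).le ((one_le_div hx).mpr (le_of_lt ht))

lemma stdNormalPDF_div_le_one_sub_stdNormalCDF {x : ℝ} (hx : 0 ≤ x) :
    stdNormalPDF x / (1 + x) ≤ 1 - stdNormalCDF x := by
  set g' : ℝ → ℝ := fun t ↦ stdNormalPDF t * ((t ^ 2 + t + 1) / (1 + t) ^ 2)
  have hderiv : ∀ t ∈ Ici x,
      HasDerivAt (fun t ↦ -(stdNormalPDF t / (1 + t))) (g' t) t := by
    intro t ht
    have h1t : 1 + t ≠ 0 := by linarith [mem_Ici.mp ht]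
    refine ((hasDerivAt_stdNormalPDF t).div ((hasDerivAt_id t).const_add 1) h1t).neg.congr_deriv ?_
    simp only [g', id]
    field_simp
    ring
  have hg'_nonneg : ∀ t ∈ Ioi x, 0 ≤ g' t := fun t ht ↦ by
    have := stdNormalPDF_pos t
    have : 0 < t := hx.trans_lt ht
    positivity
  have htendsto : Tendsto (fun t ↦ -(stdNormalPDF t / (1 + t))) atTop (𝓝 0) := by
    simpa using (tendsto_stdNormalPDF_atTop.div_atTop
      (tendsto_atTop_add_const_left _ 1 tendsto_id)).neg
  have hg' := integral_Ioi_of_hasDerivAt_of_nonneg' hderiv hg'_nonneg htendsto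
  rw [zero_sub, neg_neg] at hg'
  rw [← hg', one_sub_stdNormalCDF_eq_integral]
  refine setIntegral_mono_on
    (integrableOn_Ioi_deriv_of_nonneg' hderiv hg'_nonneg htendsto)
    integrable_stdNormalPDF.integrableOn measurableSet_Ioi fun t ht ↦ ?_
  have ht : 0 < t := hx.trans_lt ht
  refine mul_le_of_le_one_right (stdNormalPDF_pos t).le ?_
  rw [div_le_one (by positivity)]
  nlinarith

lemma stdNormalPDF_sub (z a : ℝ) :
    stdNormalPDF (z - a) = exp (z * a - a ^ 2 / 2) * stdNormalPDF z := by
  simp only [stdNormalPDF]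
  rw [mul_left_comm, ← exp_add]
  ring_nf

theorem gaussian_tail_shift_general (z a : ℝ) (hz : 8 ≤ z) (ha3 : a ≤ 3) :
    1 - stdNormalCDF (z - a) ≤ 2 * Real.exp (z * a) * (1 - stdNormalCDF z) := by
  have hza : 0 < z - a := by linarith
  have hφ := stdNormalPDF_pos z
  have hshift : exp (z * a - a ^ 2 / 2) ≤ exp (z * a) :=
    exp_le_exp.mpr (by linarith [sq_nonneg a])
  have hhalf : stdNormalPDF z / (z - a) ≤ 2 * (stdNormalPDF z / (1 + z)) := by
    have hmid : (1 + z) / 2 ≤ z - a := by linarith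
    refine (div_le_div_of_nonneg_left hφ.le (by linarith) hmid).trans_eq ?_
    field_simp
  calc 1 - stdNormalCDF (z - a) ≤ stdNormalPDF (z - a) / (z - a) := one_sub_stdNormalCDF_le hza
    _ = exp (z * a - a ^ 2 / 2) * (stdNormalPDF z / (z - a)) := by
      rw [stdNormalPDF_sub, mul_div_assoc]
    _ ≤ exp (z * a) * (2 * (stdNormalPDF z / (1 + z))) := by gcongr
    _ ≤ 2 * exp (z * a) * (1 - stdNormalCDF z) := by
      rw [mul_left_comm, mul_assoc]
      gcongr
      exact stdNormalPDF_div_le_one_sub_stdNormalCDF (by linarith)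

theorem gaussian_tail_shift (z a : ℝ) (hz : 8 ≤ z) (ha0 : 0 ≤ a) (ha3 : a ≤ 3) :
    1 - stdNormalCDF (z - a) ≤ 2 * Real.exp (z * a) * (1 - stdNormalCDF z) :=
  gaussian_tail_shift_general z a hz ha3
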